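/- If a shifted tabloid T is ordered up to the cell preceding (i,j) in the rowwise order, e = T_{i,j}, and U is the result of performing jeu de taquin in T with e (with respect to the empty set), then U is ordered up to (i,j), and performing reverse jeu de taquin in U with e and with respect to the cell (i,j) (with fixed row i) recovers T. -/

import Mathlib

/-- The cells of the shifted Ferrers diagram of the strict partition
`lam` with `r` rows: pairs `(i,j)` with `1 ≤ i ≤ r` and `i ≤ j ≤ lam i + i - 1`. -/
def shCells (lam : ℕ → ℕ) (r : ℕ) : Finset (ℕ × ℕ) :=
  ((Finset.Icc 1 r) ×ˢ (Finset.Icc 1 ((Finset.Icc 1 r).sup (fun i => lam i + i)))).filter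
    (fun p => p.1 ≤ p.2 ∧ p.2 + 1 ≤ lam p.1 + p.1)

/-- The shifted hook of a cell `c = (i,j)`: the cell itself, the cells to its right in
row `i`, the cells below it in column `j`, and, if the diagonal cell `(j,j)` belongs to
this set, additionally all cells of row `j+1`. -/
def shHook (lam : ℕ → ℕ) (r : ℕ) (c : ℕ × ℕ) : Finset (ℕ × ℕ) :=
  (shCells lam r).filter (fun p =>
    p = c ∨ (p.1 = c.1 ∧ c.2 < p.2) ∨ (p.2 = c.2 ∧ c.1 < p.1) ∨
      (c.1 ≤ c.2 ∧ (c.2, c.2) ∈ shCells lam r ∧ p.1 = c.2 + 1))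

/-- The shifted hook length of a cell. -/
def shHookLen (lam : ℕ → ℕ) (r : ℕ) (c : ℕ × ℕ) : ℕ := (shHook lam r c).card

/-- `lam` is a strict partition of `n` with `r` (positive, strictly decreasing) parts. -/
def IsStrictPartition (lam : ℕ → ℕ) (r n : ℕ) : Prop :=
  0 < r ∧ (∀ i, 1 ≤ i → i ≤ r → 0 < lam i) ∧
    (∀ i j, 1 ≤ i → i < j → j ≤ r → lam j < lam i) ∧
    (∑ i ∈ Finset.Icc 1 r, lam i) = n

/-- A shifted tabloid: a bijective filling of the shifted Ferrers diagram with `1,…,n`. -/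
def IsShTabloid (lam : ℕ → ℕ) (r n : ℕ) (T : ℕ × ℕ → ℕ) : Prop :=
  Set.BijOn T (↑(shCells lam r)) (↑(Finset.Icc 1 n))

/-- Entries increase along rows and columns. -/
def IsIncreasing (lam : ℕ → ℕ) (r : ℕ) (T : ℕ × ℕ → ℕ) : Prop :=
  ∀ p ∈ shCells lam r, ∀ q ∈ shCells lam r,
    ((q.1 = p.1 ∧ q.2 = p.2 + 1) ∨ (q.1 = p.1 + 1 ∧ q.2 = p.2)) → T p < T q

/-- The rowwise order on cells: `a` precedes `b` iff `a` is in a lower row, or in the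
same row strictly to the right. -/
def rowLT (a b : ℕ × ℕ) : Prop := b.1 < a.1 ∨ (a.1 = b.1 ∧ b.2 < a.2)

/-- `IsJdtResult lam r D T c₀ U` holds if `U` can be obtained from `T` by performing
jeu de taquin with the entry in cell `c₀`, with respect to the set of cells `D`:
there is a finite run of swap steps, each moving the entry one cell to the right or
downwards (always exchanging it with the smaller of its right and lower neighbours,
missing cells counting as `+∞`), stopping as soon as the entry is stable or lies in
a cell of `D`. -/
def IsJdtResult (lam : ℕ → ℕ) (r : ℕ) (D : Finset (ℕ × ℕ)) (T : ℕ × ℕ → ℕ)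
    (c₀ : ℕ × ℕ) (U : ℕ × ℕ → ℕ) : Prop :=
  ∃ (m : ℕ) (path : ℕ → ℕ × ℕ) (tab : ℕ → ℕ × ℕ → ℕ),
    path 0 = c₀ ∧ tab 0 = T ∧ tab m = U ∧
    (∀ k, k < m →
      path k ∉ D ∧
      (path (k + 1) = ((path k).1 + 1, (path k).2) ∨
        path (k + 1) = ((path k).1, (path k).2 + 1)) ∧
      path (k + 1) ∈ shCells lam r ∧
      tab k (path (k + 1)) < tab k (path k) ∧
      (∀ σ ∈ shCells lam r,
        (σ = ((path k).1 + 1, (path k).2) ∨ σ = ((path k).1, (path k).2 + 1)) →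
          tab k (path (k + 1)) ≤ tab k σ) ∧
      tab (k + 1) = fun c =>
        if c = path k then tab k (path (k + 1))
        else if c = path (k + 1) then tab k (path k) else tab k c) ∧
    (path m ∈ D ∨
      ∀ σ ∈ shCells lam r,
        (σ = ((path m).1 + 1, (path m).2) ∨ σ = ((path m).1, (path m).2 + 1)) →
          tab m (path m) ≤ tab m σ)

/-- `IsRjtResult lam r i D U c₀ T` holds if `T` can be obtained from `U` by performing
reverse jeu de taquin (with fixed row `i`) with the entry in cell `c₀`, with respect
to the set of cells `D`: while the current cell `(i',j')` of the entry is neither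
`(i,i)` nor in `D`, the entry is swapped with its left neighbour if `i' = i`, with its
upper neighbour if `i' = j'`, and otherwise with the larger of its upper and left
neighbours. -/
def IsRjtResult (lam : ℕ → ℕ) (r i : ℕ) (D : Finset (ℕ × ℕ)) (U : ℕ × ℕ → ℕ)
    (c₀ : ℕ × ℕ) (T : ℕ × ℕ → ℕ) : Prop :=
  ∃ (m : ℕ) (path : ℕ → ℕ × ℕ) (tab : ℕ → ℕ × ℕ → ℕ),
    path 0 = c₀ ∧ tab 0 = U ∧ tab m = T ∧
    (∀ k, k < m →
      path k ≠ (i, i) ∧ path k ∉ D ∧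
      ((path k).1 = i → path (k + 1) = ((path k).1, (path k).2 - 1)) ∧
      ((path k).1 ≠ i → (path k).1 = (path k).2 →
        path (k + 1) = ((path k).1 - 1, (path k).2)) ∧
      ((path k).1 ≠ i → (path k).1 ≠ (path k).2 →
        ((path (k + 1) = ((path k).1 - 1, (path k).2) ∨
            path (k + 1) = ((path k).1, (path k).2 - 1)) ∧
          (∀ σ ∈ shCells lam r,
            (σ = ((path k).1 - 1, (path k).2) ∨ σ = ((path k).1, (path k).2 - 1)) →
              tab k σ ≤ tab k (path (k + 1))))) ∧
      path (k + 1) ∈ shCells lam r ∧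
      tab (k + 1) = fun c =>
        if c = path k then tab k (path (k + 1))
        else if c = path (k + 1) then tab k (path k) else tab k c) ∧
    (path m = (i, i) ∨ path m ∈ D)


/-!
During jeu de taquin the entry `e = T (i,j)` travels along a lattice path
`π₀ = (i,j), π₁, …, πₘ` whose antidiagonal index `π.1 + π.2` grows by one per step, so its cells
are distinct, and the result `U` is `T` with each `T πₗ₊₁` moved back to `πₗ` and `e` placed at
`πₘ`. The cells `πₖ`, `k ≥ 1`, lie after `(i,j)` in the rowwise order, where `T` is already
ordered; so every inequality needed for `U` is either one of the "smaller outer neighbour"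
choices made by the run or an inequality of `T` in the ordered region. The same inequalities
show that reverse jeu de taquin from `πₘ` retraces the path: at `πₗ₊₁` the larger inner
neighbour is `πₗ`, because the other inner neighbour still carries its entry from `T`.
-/

open Function

def IsLatticeStep (p q : ℕ × ℕ) : Prop :=
  (q.1 = p.1 ∧ q.2 = p.2 + 1) ∨ (q.1 = p.1 + 1 ∧ q.2 = p.2)

theorem isLatticeStep_iff {p q : ℕ × ℕ} :
    IsLatticeStep p q ↔ q = (p.1 + 1, p.2) ∨ q = (p.1, p.2 + 1) := by
  rw [IsLatticeStep, or_comm, Prod.ext_iff, Prod.ext_iff]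

theorem isLatticeStep_iff_of_one_le {p q : ℕ × ℕ} (h₁ : 1 ≤ q.1) (h₂ : 1 ≤ q.2) :
    IsLatticeStep p q ↔ p = (q.1 - 1, q.2) ∨ p = (q.1, q.2 - 1) := by
  simp only [IsLatticeStep, Prod.ext_iff]
  omega

theorem IsLatticeStep.add_eq {p q : ℕ × ℕ} (h : IsLatticeStep p q) :
    q.1 + q.2 = p.1 + p.2 + 1 := by
  unfold IsLatticeStep at h
  omega

theorem IsLatticeStep.fst_le {p q : ℕ × ℕ} (h : IsLatticeStep p q) : p.1 ≤ q.1 := by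
  unfold IsLatticeStep at h
  omega

theorem IsLatticeStep.not_rowLT {p q : ℕ × ℕ} (h : IsLatticeStep p q) : ¬ rowLT p q := by
  unfold IsLatticeStep at h
  unfold rowLT
  omega

theorem rowLT_of_le_of_add_le {p c : ℕ × ℕ} (h₁ : c.1 ≤ p.1) (h₂ : c.1 + c.2 ≤ p.1 + p.2)
    (hne : p ≠ c) : rowLT p c := by
  rw [Ne, Prod.ext_iff] at hne
  unfold rowLT
  omega

theorem one_le_fst_of_mem_shCells {lam : ℕ → ℕ} {r : ℕ} {c : ℕ × ℕ}
    (hc : c ∈ shCells lam r) : 1 ≤ c.1 := by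
  simp only [shCells, Finset.mem_filter, Finset.mem_product, Finset.mem_Icc] at hc
  exact hc.1.1.1

theorem fst_le_snd_of_mem_shCells {lam : ℕ → ℕ} {r : ℕ} {c : ℕ × ℕ}
    (hc : c ∈ shCells lam r) : c.1 ≤ c.2 := by
  simp only [shCells, Finset.mem_filter] at hc
  exact hc.2.1

def IsOrderedOn (lam : ℕ → ℕ) (r : ℕ) (T : ℕ × ℕ → ℕ) (S : ℕ × ℕ → Prop) : Prop :=
  ∀ p ∈ shCells lam r, ∀ q ∈ shCells lam r, S p → S q → IsLatticeStep p q → T p < T q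

theorem ite_eq_comp_swap {α β : Type*} [DecidableEq α] (f : α → β) (a b : α) :
    (fun c => if c = a then f b else if c = b then f a else f c) = f ∘ Equiv.swap a b := by
  funext c
  simp only [comp_apply, Equiv.swap_apply_def]
  split_ifs <;> rfl

section LatticePath

variable {path : ℕ → ℕ × ℕ} {m : ℕ}

theorem add_path_eq (hstep : ∀ k < m, IsLatticeStep (path k) (path (k + 1))) {k : ℕ}
    (hk : k ≤ m) : (path k).1 + (path k).2 = (path 0).1 + (path 0).2 + k := by
  induction k with
  | zero => rfl
  | succ k ih =>
    have := (hstep k hk).add_eq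
    have := ih (by omega)
    omega

theorem fst_path_zero_le (hstep : ∀ k < m, IsLatticeStep (path k) (path (k + 1))) {k : ℕ}
    (hk : k ≤ m) : (path 0).1 ≤ (path k).1 := by
  induction k with
  | zero => rfl
  | succ k ih => exact (ih (by omega)).trans (hstep k hk).fst_le

theorem injOn_path (hstep : ∀ k < m, IsLatticeStep (path k) (path (k + 1))) :
    Set.InjOn path (Set.Iic m) := by
  intro k hk l hl h
  have hk' := add_path_eq hstep (Set.mem_Iic.mp hk)
  have hl' := add_path_eq hstep (Set.mem_Iic.mp hl)
  rw [h] at hk'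
  omega

end LatticePath

section Sliding

variable {α β : Type*} [DecidableEq α] {path : ℕ → α} {tab : ℕ → α → β} {m : ℕ}

theorem tab_apply_of_forall_ne
    (hswap : ∀ k < m, tab (k + 1) = tab k ∘ Equiv.swap (path k) (path (k + 1)))
    {k : ℕ} (hk : k ≤ m) {c : α} (hc : ∀ l ≤ k, c ≠ path l) : tab k c = tab 0 c := by
  induction k with
  | zero => rfl
  | succ k ih =>
    rw [hswap k hk, comp_apply, Equiv.swap_apply_of_ne_of_ne (hc k (by omega)) (hc (k + 1) le_rfl)]
    exact ih (by omega) fun l hl => hc l (by omega)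

theorem tab_apply_path_self
    (hswap : ∀ k < m, tab (k + 1) = tab k ∘ Equiv.swap (path k) (path (k + 1)))
    {k : ℕ} (hk : k ≤ m) : tab k (path k) = tab 0 (path 0) := by
  induction k with
  | zero => rfl
  | succ k ih => rw [hswap k hk, comp_apply, Equiv.swap_apply_right, ih (by omega)]

theorem tab_apply_path_of_lt (hinj : Set.InjOn path (Set.Iic m))
    (hswap : ∀ k < m, tab (k + 1) = tab k ∘ Equiv.swap (path k) (path (k + 1)))
    {k l : ℕ} (hl : l < k) (hk : k ≤ m) : tab k (path l) = tab 0 (path (l + 1)) := by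
  have hne : ∀ {a b}, a ≤ m → b ≤ m → a ≠ b → path a ≠ path b := fun ha hb hab h =>
    hab (hinj (Set.mem_Iic.mpr ha) (Set.mem_Iic.mpr hb) h)
  induction k with
  | zero => omega
  | succ k ih =>
    rw [hswap k hk, comp_apply]
    rcases Nat.lt_succ_iff_lt_or_eq.mp hl with hlk | rfl
    · rw [Equiv.swap_apply_of_ne_of_ne (hne (by omega) (by omega) hlk.ne)
        (hne (by omega) hk (by omega))]
      exact ih hlk (by omega)
    · rw [Equiv.swap_apply_left]
      exact tab_apply_of_forall_ne hswap (by omega) fun l' hl' => hne hk (by omega) (by omega)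

end Sliding

/-- Jeu de taquin with respect to the empty set: `path k` is the cell of the moving entry and
`tab k` the filling after `k` swaps. -/
structure IsJdtRun (lam : ℕ → ℕ) (r : ℕ) (T : ℕ × ℕ → ℕ) (c₀ : ℕ × ℕ) (m : ℕ)
    (path : ℕ → ℕ × ℕ) (tab : ℕ → ℕ × ℕ → ℕ) : Prop where
  path_zero : path 0 = c₀
  tab_zero : tab 0 = T
  isLatticeStep : ∀ k < m, IsLatticeStep (path k) (path (k + 1))
  mem_shCells : ∀ k ≤ m, path k ∈ shCells lam r
  tab_succ : ∀ k < m, tab (k + 1) = tab k ∘ Equiv.swap (path k) (path (k + 1))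
  apply_succ_lt : ∀ k < m, tab k (path (k + 1)) < tab k (path k)
  apply_succ_le : ∀ k < m, ∀ σ ∈ shCells lam r, IsLatticeStep (path k) σ →
    tab k (path (k + 1)) ≤ tab k σ
  apply_last_le : ∀ σ ∈ shCells lam r, IsLatticeStep (path m) σ → tab m (path m) ≤ tab m σ

theorem IsJdtResult.exists_isJdtRun {lam : ℕ → ℕ} {r : ℕ} {T U : ℕ × ℕ → ℕ} {c₀ : ℕ × ℕ}
    (h : IsJdtResult lam r ∅ T c₀ U) (hc₀ : c₀ ∈ shCells lam r) :
    ∃ m path tab, tab m = U ∧ IsJdtRun lam r T c₀ m path tab := by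
  obtain ⟨m, path, tab, hp0, ht0, htm, hstep, hfin⟩ := h
  refine ⟨m, path, tab, htm, ⟨hp0, ht0, fun k hk => ?_, fun k hk => ?_, fun k hk => ?_,
    fun k hk => (hstep k hk).2.2.2.1, fun k hk σ hσ hkσ => ?_, fun σ hσ hmσ => ?_⟩⟩
  · exact isLatticeStep_iff.mpr (hstep k hk).2.1
  · cases k with
    | zero => exact hp0 ▸ hc₀
    | succ k => exact (hstep k hk).2.2.1
  · rw [(hstep k hk).2.2.2.2.2, ite_eq_comp_swap]
  · exact (hstep k hk).2.2.2.2.1 σ hσ (isLatticeStep_iff.mp hkσ)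
  · exact hfin.resolve_left (Finset.notMem_empty _) σ hσ (isLatticeStep_iff.mp hmσ)

/-- The conditions that `IsRjtResult` imposes on a single move `a → b` in the filling `U`. -/
def IsRjtMove (lam : ℕ → ℕ) (r i : ℕ) (D : Finset (ℕ × ℕ)) (U : ℕ × ℕ → ℕ)
    (a b : ℕ × ℕ) : Prop :=
  a ≠ (i, i) ∧ a ∉ D ∧
    (a.1 = i → b = (a.1, a.2 - 1)) ∧
    (a.1 ≠ i → a.1 = a.2 → b = (a.1 - 1, a.2)) ∧
    (a.1 ≠ i → a.1 ≠ a.2 →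
      (b = (a.1 - 1, a.2) ∨ b = (a.1, a.2 - 1)) ∧
        ∀ σ ∈ shCells lam r, (σ = (a.1 - 1, a.2) ∨ σ = (a.1, a.2 - 1)) → U σ ≤ U b) ∧
    b ∈ shCells lam r

theorem isRjtResult_of_isRjtMove {lam : ℕ → ℕ} {r i : ℕ} {D : Finset (ℕ × ℕ)} {m : ℕ}
    {path : ℕ → ℕ × ℕ} {tab : ℕ → ℕ × ℕ → ℕ}
    (hmove : ∀ l < m, IsRjtMove lam r i D (tab (l + 1)) (path (l + 1)) (path l))
    (hswap : ∀ l < m, tab (l + 1) = tab l ∘ Equiv.swap (path l) (path (l + 1)))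
    (hend : path 0 = (i, i) ∨ path 0 ∈ D) :
    IsRjtResult lam r i D (tab m) (path m) (tab 0) := by
  refine ⟨m, fun k => path (m - k), fun k => tab (m - k), rfl, rfl, by simp, fun k hk => ?_,
    by simpa using hend⟩
  obtain ⟨l, hl, hk₁, hk₂⟩ : ∃ l, l < m ∧ m - k = l + 1 ∧ m - (k + 1) = l :=
    ⟨m - (k + 1), by omega, by omega, rfl⟩
  simp only [hk₁, hk₂]
  obtain ⟨h₁, h₂, h₃, h₄, h₅, h₆⟩ := hmove l hl
  refine ⟨h₁, h₂, h₃, h₄, h₅, h₆, ?_⟩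
  rw [ite_eq_comp_swap, hswap l hl, Equiv.swap_comm]
  funext c
  simp only [comp_apply, Equiv.swap_apply_self]

namespace IsJdtRun

variable {lam : ℕ → ℕ} {r : ℕ} {T : ℕ × ℕ → ℕ} {c₀ : ℕ × ℕ} {m : ℕ}
  {path : ℕ → ℕ × ℕ} {tab : ℕ → ℕ × ℕ → ℕ}

theorem add_eq (h : IsJdtRun lam r T c₀ m path tab) {k : ℕ} (hk : k ≤ m) :
    (path k).1 + (path k).2 = c₀.1 + c₀.2 + k :=
  h.path_zero ▸ add_path_eq h.isLatticeStep hk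

theorem fst_le (h : IsJdtRun lam r T c₀ m path tab) {k : ℕ} (hk : k ≤ m) :
    c₀.1 ≤ (path k).1 :=
  h.path_zero ▸ fst_path_zero_le h.isLatticeStep hk

theorem apply_of_forall_ne (h : IsJdtRun lam r T c₀ m path tab) {k : ℕ} (hk : k ≤ m)
    {c : ℕ × ℕ} (hc : ∀ l ≤ k, c ≠ path l) : tab k c = T c :=
  h.tab_zero ▸ tab_apply_of_forall_ne h.tab_succ hk hc

theorem apply_path_self (h : IsJdtRun lam r T c₀ m path tab) {k : ℕ} (hk : k ≤ m) :
    tab k (path k) = T c₀ := by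
  rw [tab_apply_path_self h.tab_succ hk, h.tab_zero, h.path_zero]

theorem apply_path_of_lt (h : IsJdtRun lam r T c₀ m path tab) {k l : ℕ} (hl : l < k)
    (hk : k ≤ m) : tab k (path l) = T (path (l + 1)) :=
  h.tab_zero ▸ tab_apply_path_of_lt (injOn_path h.isLatticeStep) h.tab_succ hl hk

theorem rowLT_path (h : IsJdtRun lam r T c₀ m path tab) {k : ℕ} (hk₁ : 1 ≤ k) (hk : k ≤ m) :
    rowLT (path k) c₀ := by
  have := h.add_eq hk
  refine rowLT_of_le_of_add_le (h.fst_le hk) (by omega) fun he => ?_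
  rw [he] at this
  omega

theorem apply_path_succ (h : IsJdtRun lam r T c₀ m path tab) {k : ℕ} (hk : k < m) :
    tab k (path (k + 1)) = T (path (k + 1)) :=
  h.apply_of_forall_ne hk.le fun l hl he =>
    absurd (injOn_path h.isLatticeStep (Set.mem_Iic.mpr hk) (Set.mem_Iic.mpr (hl.trans hk.le))
      he) (by omega)

theorem lt_apply_path_last (h : IsJdtRun lam r T c₀ m path tab) (hm : 0 < m) :
    T (path m) < T c₀ := by
  obtain ⟨k, rfl⟩ : ∃ k, m = k + 1 := ⟨m - 1, by omega⟩
  simpa only [h.apply_path_self k.le_succ, h.apply_path_succ k.lt_succ_self] using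
    h.apply_succ_lt k k.lt_succ_self

theorem lt_apply_last (h : IsJdtRun lam r T c₀ m path tab)
    (hord : IsOrderedOn lam r T (rowLT · c₀)) {k : ℕ} (hk₁ : 1 ≤ k) (hk : k ≤ m) :
    T (path k) < tab m (path k) := by
  rcases hk.lt_or_eq with hkm | rfl
  · rw [h.apply_path_of_lt hkm le_rfl]
    exact hord _ (h.mem_shCells k hk) _ (h.mem_shCells (k + 1) hkm) (h.rowLT_path hk₁ hk)
      (h.rowLT_path (by omega) hkm) (h.isLatticeStep k hkm)
  · rw [h.apply_path_self le_rfl]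
    exact h.lt_apply_path_last (by omega)

theorem eq_path_last_of_apply_eq (h : IsJdtRun lam r T c₀ m path tab)
    (hinj : Set.InjOn T (shCells lam r)) {c : ℕ × ℕ} (hc : c ∈ shCells lam r)
    (he : tab m c = T c₀) : c = path m := by
  have hc₀ : c₀ ∈ shCells lam r := h.path_zero ▸ h.mem_shCells 0 (Nat.zero_le m)
  by_cases hpath : ∃ l ≤ m, c = path l
  · obtain ⟨l, hl, rfl⟩ := hpath
    refine (hl.lt_or_eq.resolve_left fun hlm => ?_) ▸ rfl
    rw [h.apply_path_of_lt hlm le_rfl] at he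
    have := h.add_eq (k := l + 1) hlm
    rw [hinj (h.mem_shCells _ hlm) hc₀ he] at this
    omega
  · push Not at hpath
    rw [h.apply_of_forall_ne le_rfl hpath] at he
    exact absurd (h.path_zero ▸ hinj hc hc₀ he) (hpath 0 (Nat.zero_le m))

theorem apply_path_lt (h : IsJdtRun lam r T c₀ m path tab)
    (hinj : Set.InjOn T (shCells lam r)) (hord : IsOrderedOn lam r T (rowLT · c₀))
    {l : ℕ} (hl : l ≤ m) {q : ℕ × ℕ} (hq : q ∈ shCells lam r)
    (hstep : IsLatticeStep (path l) q) : tab m (path l) < tab m q := by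
  by_cases hqpath : ∃ l' ≤ m, q = path l'
  · obtain ⟨l', hl', rfl⟩ := hqpath
    have := h.add_eq hl
    have := h.add_eq hl'
    have := hstep.add_eq
    obtain rfl : l' = l + 1 := by omega
    rw [h.apply_path_of_lt (k := m) (by omega) le_rfl]
    exact h.lt_apply_last hord (by omega) hl'
  push Not at hqpath
  have hTq := h.apply_of_forall_ne le_rfl hqpath
  rcases hl.lt_or_eq with hlm | rfl
  · have hle := h.apply_succ_le l hlm q hq hstep
    rw [h.apply_path_of_lt hlm le_rfl, hTq]
    rw [h.apply_path_succ hlm, h.apply_of_forall_ne hlm.le fun l' hl' => hqpath l' (by omega)]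
      at hle
    exact hle.lt_of_ne fun he => hqpath (l + 1) hlm (hinj hq (h.mem_shCells _ hlm) he.symm)
  · have hle := h.apply_last_le q hq hstep
    rw [h.apply_path_self le_rfl, hTq] at hle ⊢
    exact hle.lt_of_ne fun he =>
      hqpath 0 (Nat.zero_le _) (h.path_zero ▸ hinj hq (h.path_zero ▸ h.mem_shCells 0
        (Nat.zero_le _)) he.symm)

theorem isOrderedOn_tab_last (h : IsJdtRun lam r T c₀ m path tab)
    (hinj : Set.InjOn T (shCells lam r)) (hord : IsOrderedOn lam r T (rowLT · c₀)) :
    IsOrderedOn lam r (tab m) (fun p => p = c₀ ∨ rowLT p c₀) := by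
  intro p hp q hq hpS hqS hstep
  by_cases hppath : ∃ l ≤ m, p = path l
  · obtain ⟨l, hl, rfl⟩ := hppath
    exact h.apply_path_lt hinj hord hl hq hstep
  push Not at hppath
  have hpc₀ : rowLT p c₀ := hpS.resolve_left (h.path_zero ▸ hppath 0 (Nat.zero_le m))
  rw [h.apply_of_forall_ne le_rfl hppath]
  by_cases hqpath : ∃ l ≤ m, q = path l
  · obtain ⟨l, hl, rfl⟩ := hqpath
    have hl₁ : 1 ≤ l := Nat.one_le_iff_ne_zero.mpr fun hl0 => by
      subst hl0
      rw [h.path_zero] at hstep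
      exact hstep.not_rowLT hpc₀
    exact (hord p hp _ hq hpc₀ (h.rowLT_path hl₁ hl) hstep).trans (h.lt_apply_last hord hl₁ hl)
  · push Not at hqpath
    rw [h.apply_of_forall_ne le_rfl hqpath]
    exact hord p hp q hq hpc₀ (hqS.resolve_left (h.path_zero ▸ hqpath 0 (Nat.zero_le m))) hstep

theorem apply_le_apply_path (h : IsJdtRun lam r T c₀ m path tab)
    (hord : IsOrderedOn lam r T (rowLT · c₀)) {l : ℕ} (hl : l < m) {σ : ℕ × ℕ}
    (hσ : σ ∈ shCells lam r) (hstep : IsLatticeStep σ (path (l + 1)))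
    (hrow : (path (l + 1)).1 ≠ c₀.1) : tab (l + 1) σ ≤ tab (l + 1) (path l) := by
  by_cases hσl : σ = path l
  · rw [hσl]
  have hσsum := hstep.add_eq
  have hlsum := h.add_eq (k := l + 1) hl
  have hoff : ∀ l' ≤ l + 1, σ ≠ path l' := fun l' hl' he => by
    have := h.add_eq (k := l') (by omega)
    rw [← he] at this
    obtain rfl : l' = l := by omega
    exact hσl he
  rw [h.apply_of_forall_ne hl hoff, h.apply_path_of_lt (Nat.lt_succ_self l) hl]
  refine (hord σ hσ _ (h.mem_shCells _ hl) ?_ (h.rowLT_path (by omega) hl) hstep).le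
  have := h.fst_le (k := l + 1) hl
  unfold IsLatticeStep at hstep
  exact rowLT_of_le_of_add_le (by omega) (by omega) (h.path_zero ▸ hoff 0 (Nat.zero_le _))

theorem isRjtMove (h : IsJdtRun lam r T c₀ m path tab)
    (hord : IsOrderedOn lam r T (rowLT · c₀)) {l : ℕ} (hl : l < m) :
    IsRjtMove lam r c₀.1 {c₀} (tab (l + 1)) (path (l + 1)) (path l) := by
  have ha := h.mem_shCells (l + 1) hl
  have hb := h.mem_shCells l hl.le
  have ha₁ := one_le_fst_of_mem_shCells ha
  have ha₂ := fst_le_snd_of_mem_shCells ha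
  have hb₂ := fst_le_snd_of_mem_shCells hb
  have hc₀ := fst_le_snd_of_mem_shCells (h.path_zero ▸ h.mem_shCells 0 (Nat.zero_le m))
  have hsum := h.add_eq (k := l + 1) hl
  have hrow := h.fst_le hl.le
  have hback := (isLatticeStep_iff_of_one_le ha₁ (by omega)).mp (h.isLatticeStep l hl)
  refine ⟨fun he => ?_, fun he => ?_, fun hi => ?_, fun hi hd => ?_,
    fun hi _ => ⟨hback, fun σ hσ hσa => h.apply_le_apply_path hord hl hσ
      ((isLatticeStep_iff_of_one_le ha₁ (by omega)).mpr hσa) hi⟩, hb⟩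
  · rw [he] at hsum
    omega
  · rw [Finset.mem_singleton.mp he] at hsum
    omega
  all_goals simp only [Prod.ext_iff] at hback ⊢; omega

theorem isRjtResult (h : IsJdtRun lam r T c₀ m path tab)
    (hord : IsOrderedOn lam r T (rowLT · c₀)) :
    IsRjtResult lam r c₀.1 {c₀} (tab m) (path m) T :=
  h.tab_zero ▸ isRjtResult_of_isRjtMove (fun _ hl => h.isRjtMove hord hl) h.tab_succ
    (Or.inr (h.path_zero ▸ Finset.mem_singleton_self _))

end IsJdtRun

theorem jdt_rjt_inverse_general (n r : ℕ) (lam : ℕ → ℕ)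
    (T : ℕ × ℕ → ℕ) (hT : IsShTabloid lam r n T)
    (i j : ℕ) (hc : (i, j) ∈ shCells lam r)
    (hord : ∀ p ∈ shCells lam r, ∀ q ∈ shCells lam r,
      rowLT p (i, j) → rowLT q (i, j) →
      ((q.1 = p.1 ∧ q.2 = p.2 + 1) ∨ (q.1 = p.1 + 1 ∧ q.2 = p.2)) → T p < T q)
    (U : ℕ × ℕ → ℕ) (hU : IsJdtResult lam r ∅ T (i, j) U)
    (c' : ℕ × ℕ) (hc' : c' ∈ shCells lam r) (hval : U c' = T (i, j)) :
    (∀ p ∈ shCells lam r, ∀ q ∈ shCells lam r,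
      (p = (i, j) ∨ rowLT p (i, j)) → (q = (i, j) ∨ rowLT q (i, j)) →
      ((q.1 = p.1 ∧ q.2 = p.2 + 1) ∨ (q.1 = p.1 + 1 ∧ q.2 = p.2)) → U p < U q) ∧
    IsRjtResult lam r i {(i, j)} U c' T := by
  obtain ⟨m, path, tab, rfl, hrun⟩ := hU.exists_isJdtRun hc
  obtain rfl := hrun.eq_path_last_of_apply_eq hT.injOn hc' hval
  exact ⟨hrun.isOrderedOn_tab_last hT.injOn hord, hrun.isRjtResult hord⟩

/-- if `T` is ordered up to the predecessor of `(i,j)` in the rowwise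
order and `U` is obtained from `T` by jeu de taquin with the entry `e = T (i,j)`
(with respect to the empty set), then `U` is ordered up to `(i,j)`, and reverse jeu
de taquin in `U` with `e`, with respect to `{(i,j)}` and fixed row `i`, recovers `T`. -/
theorem jdt_rjt_inverse (n r : ℕ) (lam : ℕ → ℕ) (hlam : IsStrictPartition lam r n)
    (T : ℕ × ℕ → ℕ) (hT : IsShTabloid lam r n T)
    (i j : ℕ) (hc : (i, j) ∈ shCells lam r)
    (hord : ∀ p ∈ shCells lam r, ∀ q ∈ shCells lam r,
      rowLT p (i, j) → rowLT q (i, j) →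
      ((q.1 = p.1 ∧ q.2 = p.2 + 1) ∨ (q.1 = p.1 + 1 ∧ q.2 = p.2)) → T p < T q)
    (U : ℕ × ℕ → ℕ) (hU : IsJdtResult lam r ∅ T (i, j) U)
    (c' : ℕ × ℕ) (hc' : c' ∈ shCells lam r) (hval : U c' = T (i, j)) :
    (∀ p ∈ shCells lam r, ∀ q ∈ shCells lam r,
      (p = (i, j) ∨ rowLT p (i, j)) → (q = (i, j) ∨ rowLT q (i, j)) →
      ((q.1 = p.1 ∧ q.2 = p.2 + 1) ∨ (q.1 = p.1 + 1 ∧ q.2 = p.2)) → U p < U q) ∧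
    IsRjtResult lam r i {(i, j)} U c' T :=
  jdt_rjt_inverse_general n r lam T hT i j hc hord U hU c' hc' hval
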